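/- arXiv:0909.2607 — 3 statements merged into one kernel-verified Lean document; each statement's English description precedes it below -/
import Mathlib

section
/- Let d ≥ 1, n₁,…,n_d ≥ 1, n = n₁+…+n_d. Let w ∈ L¹_loc(ℝⁿ) with w > 0 almost everywhere, and suppose there is A ≥ 1 such that M_s w(x) ≤ A·w(x) for almost every x. Then log w has finite little bmo norm, and ‖log w‖_bmo ≤ 4 log A. -/
/-!
Let `a` be the average of `w` over a rectangle `R`. For a.e. `x ∈ R`, `a ≤ M_s w(x) ≤ A w(x)`,
so `log w ≥ log a - log A` there. By Jensen's inequality for `exp`, the average `m` of `log w` over `R` is at most `log a`, so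
`log w - m ≥ -log A` on `R`. A function of mean zero bounded below by `-L` has mean absolute
value at most `2L`, which gives `‖log w‖_bmo ≤ 2 log A ≤ 4 log A`.
-/

open MeasureTheory ENNReal Filter

noncomputable section

/-- A dyadic cube in `ℝ^m`, recorded by its generation `k` and its corner index `j`;
it represents the set `∏ i, [j i * 2^k, (j i + 1) * 2^k)`. -/
structure DyadicCube (m : ℕ) where
  k : ℤ
  j : Fin m → ℤ

/-- The underlying set of a dyadic cube. -/
def dyadicCubeSet {m : ℕ} (c : DyadicCube m) : Set (Fin m → ℝ) :=
  {x | ∀ i, (c.j i : ℝ) * 2 ^ c.k ≤ x i ∧ x i < ((c.j i : ℝ) + 1) * 2 ^ c.k}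

/-- The generation-`k` dyadic cube containing the point `x`. -/
def dyadicCubeOf {m : ℕ} (k : ℤ) (x : Fin m → ℝ) : DyadicCube m :=
  ⟨k, fun i => ⌊x i / 2 ^ k⌋⟩

/-- `E_k f x`: the average of `f` over the generation-`k` dyadic cube containing `x`. -/
def Ek {m : ℕ} (k : ℤ) (f : (Fin m → ℝ) → ℝ) (x : Fin m → ℝ) : ℝ :=
  ⨍ y in dyadicCubeSet (dyadicCubeOf k x), f y

/-- The martingale difference operator `Δ_Q f = (E_{k-1} f - E_k f) · 1_Q`
for a dyadic cube `Q` of generation `k`. -/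
def deltaQ {m : ℕ} (c : DyadicCube m) (f : (Fin m → ℝ) → ℝ) : (Fin m → ℝ) → ℝ :=
  (dyadicCubeSet c).indicator (fun y => Ek (c.k - 1) f y - Ek c.k f y)

/-- The product space `ℝ^{n 0} × ⋯ × ℝ^{n (d-1)}`. -/
abbrev ProductSpace {d : ℕ} (n : Fin d → ℕ) : Type := ∀ i, (Fin (n i) → ℝ)

/-- A dyadic rectangle `R = Q₁ × ⋯ × Q_d`, one dyadic cube in each block. -/
abbrev DyadicRect {d : ℕ} (n : Fin d → ℕ) : Type := ∀ i, DyadicCube (n i)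

/-- The underlying set of a dyadic rectangle. -/
def dyadicRectSet {d : ℕ} {n : Fin d → ℕ} (R : DyadicRect n) : Set (ProductSpace n) :=
  {x | ∀ i, x i ∈ dyadicCubeSet (R i)}

/-- Apply the one-parameter operator `Δ_Q` in the `i`-th block of variables. -/
def deltaBlock {d : ℕ} {n : Fin d → ℕ} (i : Fin d) (c : DyadicCube (n i))
    (f : ProductSpace n → ℝ) (x : ProductSpace n) : ℝ :=
  deltaQ c (fun y => f (Function.update x i y)) (x i)

/-- The multiparameter difference operator `Δ_R = Δ_{Q₁} ⊗ ⋯ ⊗ Δ_{Q_d}`, obtained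
by applying `Δ_{Q_i}` in the `i`-th block of variables. -/
def deltaR {d : ℕ} {n : Fin d → ℕ} (R : DyadicRect n) (f : ProductSpace n → ℝ) :
    ProductSpace n → ℝ :=
  (List.finRange d).foldr (fun i g => deltaBlock i (R i) g) f

/-- The squared `L²` norm `‖g‖_{L²}²`, as an extended nonnegative real. -/
def l2normSq {d : ℕ} {n : Fin d → ℕ} (g : ProductSpace n → ℝ) : ℝ≥0∞ :=
  ∫⁻ x, ENNReal.ofReal (g x ^ 2)

/-- The multiparameter dyadic square function `S f (x) = (∑_R |Δ_R f(x)|²)^{1/2}`. -/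
def squareFn {d : ℕ} {n : Fin d → ℕ} (f : ProductSpace n → ℝ) (x : ProductSpace n) : ℝ≥0∞ :=
  (∑' R : DyadicRect n, ENNReal.ofReal (deltaR R f x ^ 2)) ^ (1 / 2 : ℝ)

/-- The dyadic product `H¹` norm `‖S f‖_{L¹}`. -/
def H1Norm {d : ℕ} {n : Fin d → ℕ} (f : ProductSpace n → ℝ) : ℝ≥0∞ :=
  ∫⁻ x, squareFn f x

/-- An axis-parallel cube in `ℝ^m` with arbitrary corner and (positive) side length. -/
structure Cube (m : ℕ) where
  corner : Fin m → ℝ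
  side : ℝ
  side_pos : 0 < side

/-- The underlying set of a cube. -/
def cubeSet {m : ℕ} (c : Cube m) : Set (Fin m → ℝ) :=
  {x | ∀ i, c.corner i ≤ x i ∧ x i < c.corner i + c.side}

/-- A rectangle `R = Q₁ × ⋯ × Q_d`: an axis-parallel cube in each block. -/
abbrev Rect {d : ℕ} (n : Fin d → ℕ) : Type := ∀ i, Cube (n i)

/-- The underlying set of a rectangle. -/
def rectSet {d : ℕ} {n : Fin d → ℕ} (R : Rect n) : Set (ProductSpace n) :=
  {x | ∀ i, x i ∈ cubeSet (R i)}

/-- The little `bmo` norm: `sup_R |R|⁻¹ ∫_R |f - f_R|` over all rectangles. -/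
def bmo1 {d : ℕ} {n : Fin d → ℕ} (f : ProductSpace n → ℝ) : ℝ≥0∞ :=
  ⨆ R : Rect n,
    (volume (rectSet R))⁻¹ * ∫⁻ x in rectSet R, ENNReal.ofReal |f x - ⨍ y in rectSet R, f y|

/-- The `L²`-based little `bmo` norm: `sup_R (|R|⁻¹ ∫_R |f - f_R|²)^{1/2}` over all
rectangles. -/
def bmo2 {d : ℕ} {n : Fin d → ℕ} (f : ProductSpace n → ℝ) : ℝ≥0∞ :=
  ⨆ R : Rect n,
    ((volume (rectSet R))⁻¹ *
      ∫⁻ x in rectSet R, ENNReal.ofReal ((f x - ⨍ y in rectSet R, f y) ^ 2)) ^ (1 / 2 : ℝ)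

/-- The one-parameter `BMO` norm over all axis-parallel cubes in `ℝ^m`. -/
def bmo1Cube {m : ℕ} (g : (Fin m → ℝ) → ℝ) : ℝ≥0∞ :=
  ⨆ Q : Cube m,
    (volume (cubeSet Q))⁻¹ * ∫⁻ x in cubeSet Q, ENNReal.ofReal |g x - ⨍ y in cubeSet Q, g y|

/-- The `L²`-based one-parameter `BMO` norm over all axis-parallel cubes in `ℝ^m`. -/
def bmo2Cube {m : ℕ} (g : (Fin m → ℝ) → ℝ) : ℝ≥0∞ :=
  ⨆ Q : Cube m,
    ((volume (cubeSet Q))⁻¹ *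
      ∫⁻ x in cubeSet Q, ENNReal.ofReal ((g x - ⨍ y in cubeSet Q, g y) ^ 2)) ^ (1 / 2 : ℝ)

/-- The strong maximal function: supremum of averages of `|f|` over all rectangles
containing the point. -/
def strongMaximal {d : ℕ} {n : Fin d → ℕ} (f : ProductSpace n → ℝ) (x : ProductSpace n) :
    ℝ≥0∞ :=
  ⨆ (R : Rect n) (_ : x ∈ rectSet R),
    (volume (rectSet R))⁻¹ * ∫⁻ y in rectSet R, ENNReal.ofReal |f y|

end

open Set

section Average

variable {α : Type*} [MeasurableSpace α] {μ : Measure α}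

theorem inv_mul_setLIntegral_ofReal_abs {s : Set α} {g : α → ℝ} (hg : IntegrableOn g s μ) :
    (μ s)⁻¹ * ∫⁻ x in s, ENNReal.ofReal |g x| ∂μ = ENNReal.ofReal (⨍ x in s, |g x| ∂μ) := by
  rw [ofReal_setAverage hg.abs (ae_of_all _ fun _ => abs_nonneg _), ENNReal.div_eq_inv_mul]

variable [IsFiniteMeasure μ]

theorem integrable_log_of_ae_le {w : α → ℝ} {c : ℝ} (hw : Integrable w μ)
    (hpos : ∀ᵐ x ∂μ, 0 < w x) (hlow : ∀ᵐ x ∂μ, c ≤ Real.log (w x)) :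
    Integrable (fun x => Real.log (w x)) μ := by
  refine Integrable.mono' (hw.abs.add (integrable_const |c|))
    hw.aemeasurable.log.aestronglyMeasurable ?_
  filter_upwards [hpos, hlow] with x hx hcx
  have : Real.log (w x) ≤ w x - 1 := Real.log_le_sub_one_of_pos hx
  rw [Pi.add_apply, Real.norm_eq_abs, abs_le]
  constructor <;> linarith [le_abs_self (w x), neg_abs_le c, abs_nonneg c]

variable [NeZero μ]

theorem average_pos_of_ae_pos {w : α → ℝ} (hw : Integrable w μ) (hpos : ∀ᵐ x ∂μ, 0 < w x) :
    0 < ⨍ x, w x ∂μ := by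
  have hexp : (fun x => Real.exp (Real.log (w x))) =ᵐ[μ] w :=
    hpos.mono fun x hx => Real.exp_log hx
  have hint : 0 < ∫ x, w x ∂μ :=
    integral_congr_ae hexp ▸ integral_exp_pos (hw.congr hexp.symm)
  rw [average_eq, smul_eq_mul]
  exact mul_pos (inv_pos.2 measureReal_univ_pos) hint

theorem average_log_le_log_average {w : α → ℝ} (hw : Integrable w μ) (hpos : ∀ᵐ x ∂μ, 0 < w x)
    (hlog : Integrable (fun x => Real.log (w x)) μ) :
    ⨍ x, Real.log (w x) ∂μ ≤ Real.log (⨍ x, w x ∂μ) := by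
  have hexp : (fun x => Real.exp (Real.log (w x))) =ᵐ[μ] w :=
    hpos.mono fun x hx => Real.exp_log hx
  have hjensen : Real.exp (⨍ x, Real.log (w x) ∂μ) ≤ ⨍ x, w x ∂μ :=
    average_congr hexp ▸ convexOn_exp.map_average_le Real.continuous_exp.continuousOn
      isClosed_univ (ae_of_all _ fun _ => mem_univ _) hlog (hw.congr hexp.symm)
  rw [Real.le_log_iff_exp_le (average_pos_of_ae_pos hw hpos)]
  exact hjensen

/-- `f - ⨍ f` integrates to zero and `|t| ≤ t + 2L` for `t ≥ -L`. -/
theorem average_abs_sub_average_le {f : α → ℝ} {L : ℝ} (hf : Integrable f μ)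
    (hlow : ∀ᵐ x ∂μ, ⨍ y, f y ∂μ - L ≤ f x) :
    ⨍ x, |f x - ⨍ y, f y ∂μ| ∂μ ≤ 2 * L := by
  set m := ⨍ y, f y ∂μ
  have hL : 0 ≤ L := by
    obtain ⟨x, hxN, hx⟩ := exists_notMem_null_le_average (NeZero.ne μ) hf (ae_iff.1 hlow)
    have : m - L ≤ f x := not_not.1 hxN
    linarith
  have hdev : Integrable (fun x => f x - m) μ := hf.sub (integrable_const m)
  have hbound : ∀ᵐ x ∂μ, |f x - m| ≤ (f x - m) + 2 * L := by
    filter_upwards [hlow] with x hx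
    rw [abs_le]
    constructor <;> linarith
  have hint : ∫ x, |f x - m| ∂μ ≤ 2 * L * μ.real univ :=
    calc ∫ x, |f x - m| ∂μ ≤ ∫ x, (f x - m) + 2 * L ∂μ :=
          integral_mono_ae hdev.abs (hdev.add (integrable_const _)) hbound
      _ = 2 * L * μ.real univ := by
          rw [integral_add hdev (integrable_const _), integral_sub_average, integral_const,
            smul_eq_mul]
          ring
  rw [average_eq, smul_eq_mul, inv_mul_le_iff₀ measureReal_univ_pos]
  linarith

section WeightOnSet

variable {w : α → ℝ} {A : ℝ}

theorem log_average_sub_log_le (hw : Integrable w μ) (hpos : ∀ᵐ x ∂μ, 0 < w x) (hA : 0 < A)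
    (hA1 : ∀ᵐ x ∂μ, ⨍ y, w y ∂μ ≤ A * w x) :
    ∀ᵐ x ∂μ, Real.log (⨍ y, w y ∂μ) - Real.log A ≤ Real.log (w x) := by
  filter_upwards [hA1, hpos] with x hx hxpos
  have := Real.log_le_log (average_pos_of_ae_pos hw hpos) hx
  rw [Real.log_mul hA.ne' hxpos.ne'] at this
  linarith

theorem integrable_log_of_average_le_mul (hw : Integrable w μ) (hpos : ∀ᵐ x ∂μ, 0 < w x)
    (hA : 0 < A) (hA1 : ∀ᵐ x ∂μ, ⨍ y, w y ∂μ ≤ A * w x) :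
    Integrable (fun x => Real.log (w x)) μ :=
  integrable_log_of_ae_le hw hpos (log_average_sub_log_le hw hpos hA hA1)

theorem average_abs_log_sub_average_le (hw : Integrable w μ) (hpos : ∀ᵐ x ∂μ, 0 < w x)
    (hA : 0 < A) (hA1 : ∀ᵐ x ∂μ, ⨍ y, w y ∂μ ≤ A * w x) :
    ⨍ x, |Real.log (w x) - ⨍ y, Real.log (w y) ∂μ| ∂μ ≤ 2 * Real.log A := by
  have hlog := integrable_log_of_average_le_mul hw hpos hA hA1
  refine average_abs_sub_average_le hlog ?_
  filter_upwards [log_average_sub_log_le hw hpos hA hA1] with x hx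
  linarith [average_log_le_log_average hw hpos hlog]

end WeightOnSet

end Average

section Rectangles

variable {d : ℕ} {n : Fin d → ℕ}

theorem rectSet_eq_pi (R : Rect n) :
    rectSet R = univ.pi fun i =>
      univ.pi fun j => Ico ((R i).corner j) ((R i).corner j + (R i).side) := by
  ext x
  simp [rectSet, cubeSet]

theorem measurableSet_rectSet (R : Rect n) : MeasurableSet (rectSet R) := by
  rw [rectSet_eq_pi]
  exact .univ_pi fun _ => .univ_pi fun _ => measurableSet_Ico

theorem isBounded_rectSet (R : Rect n) : Bornology.IsBounded (rectSet R) := by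
  rw [rectSet_eq_pi]
  exact .pi fun _ => .pi fun _ => Metric.isBounded_Ico _ _

theorem volume_rectSet (R : Rect n) :
    volume (rectSet R) = ∏ i, ENNReal.ofReal (R i).side ^ n i := by
  simp [rectSet_eq_pi, volume_pi_pi, Real.volume_Ico]

instance (R : Rect n) : NeZero (volume (rectSet R)) :=
  ⟨by simp [volume_rectSet, Finset.prod_eq_zero_iff, (R _).side_pos]⟩

instance (R : Rect n) : IsFiniteMeasure (volume.restrict (rectSet R)) :=
  isFiniteMeasure_restrict.2 (isBounded_rectSet R).measure_lt_top.ne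

theorem MeasureTheory.LocallyIntegrable.integrableOn_rectSet {w : ProductSpace n → ℝ}
    (hw : LocallyIntegrable w volume) (R : Rect n) : IntegrableOn w (rectSet R) volume :=
  (hw.integrableOn_isCompact (isBounded_rectSet R).isCompact_closure).mono_set subset_closure

theorem ofReal_setAverage_abs_le_strongMaximal {w : ProductSpace n → ℝ} {R : Rect n}
    (hwR : IntegrableOn w (rectSet R) volume) {x : ProductSpace n} (hx : x ∈ rectSet R) :
    ENNReal.ofReal (⨍ y in rectSet R, |w y|) ≤ strongMaximal w x := by
  rw [← inv_mul_setLIntegral_ofReal_abs hwR, strongMaximal]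
  exact le_iSup₂ (f := fun (R' : Rect n) (_ : x ∈ rectSet R') =>
    (volume (rectSet R'))⁻¹ * ∫⁻ y in rectSet R', ENNReal.ofReal |w y|) R hx

theorem ae_setAverage_le_mul_of_strongMaximal_le {w : ProductSpace n → ℝ} {A : ℝ}
    (hw : LocallyIntegrable w volume) (hpos : ∀ᵐ x ∂volume, 0 < w x) (hA : 0 ≤ A)
    (hA1 : ∀ᵐ x ∂volume, strongMaximal w x ≤ ENNReal.ofReal (A * w x)) (R : Rect n) :
    ∀ᵐ x ∂volume.restrict (rectSet R), ⨍ y in rectSet R, w y ≤ A * w x := by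
  have habs : ⨍ y in rectSet R, |w y| = ⨍ y in rectSet R, w y :=
    average_congr ((ae_restrict_of_ae hpos).mono fun y hy => abs_of_pos hy)
  rw [ae_restrict_iff' (measurableSet_rectSet R)]
  filter_upwards [hA1, hpos] with x hx hxpos hxR
  rw [← habs, ← ENNReal.ofReal_le_ofReal_iff (mul_nonneg hA hxpos.le)]
  exact (ofReal_setAverage_abs_le_strongMaximal (hw.integrableOn_rectSet R) hxR).trans hx

end Rectangles

theorem statement10_general {d : ℕ} (n : Fin d → ℕ)
    (w : ProductSpace n → ℝ) (hw : LocallyIntegrable w volume)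
    (hwpos : ∀ᵐ x ∂(volume : Measure (ProductSpace n)), 0 < w x)
    (A : ℝ) (hA : 1 ≤ A)
    (hA1 : ∀ᵐ x ∂(volume : Measure (ProductSpace n)),
      strongMaximal w x ≤ ENNReal.ofReal (A * w x)) :
    bmo1 (fun x => Real.log (w x)) ≤ ENNReal.ofReal (4 * Real.log A) := by
  have hA0 : 0 < A := zero_lt_one.trans_le hA
  refine iSup_le fun R => ?_
  have hwR := hw.integrableOn_rectSet R
  have hwRpos := ae_restrict_of_ae (s := rectSet R) hwpos
  have hA1R := ae_setAverage_le_mul_of_strongMaximal_le hw hwpos hA0.le hA1 R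
  have hlog := integrable_log_of_average_le_mul hwR hwRpos hA0 hA1R
  have hosc : IntegrableOn (fun x => Real.log (w x) - ⨍ y in rectSet R, Real.log (w y))
      (rectSet R) volume := hlog.sub (integrable_const _)
  rw [inv_mul_setLIntegral_ofReal_abs hosc]
  refine ENNReal.ofReal_le_ofReal ?_
  linarith [average_abs_log_sub_average_le hwR hwRpos hA0 hA1R, Real.log_nonneg hA]

/-- if `w > 0` a.e. is locally integrable and `M_s w ≤ A·w` a.e. for
some `A ≥ 1` (a strong-maximal `A₁` weight), then `log w` has finite little `bmo` norm
and `‖log w‖_bmo ≤ 4 log A`. -/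
theorem statement10 {d : ℕ} (hd : 1 ≤ d) (n : Fin d → ℕ) (hn : ∀ i, 1 ≤ n i)
    (w : ProductSpace n → ℝ) (hw : LocallyIntegrable w volume)
    (hwpos : ∀ᵐ x ∂(volume : Measure (ProductSpace n)), 0 < w x)
    (A : ℝ) (hA : 1 ≤ A)
    (hA1 : ∀ᵐ x ∂(volume : Measure (ProductSpace n)),
      strongMaximal w x ≤ ENNReal.ofReal (A * w x)) :
    bmo1 (fun x => Real.log (w x)) ≤ ENNReal.ofReal (4 * Real.log A) :=
  statement10_general n w hw hwpos A hA hA1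
end

section
/- Let d ≥ 1, n₁,…,n_d ≥ 1, n = n₁+…+n_d. There is a constant C depending only on n₁,…,n_d such that for every f ∈ L¹_loc(ℝⁿ) with ‖f‖_bmo < ∞ one has f ∈ L²_loc(ℝⁿ) and ‖f‖_{bmo,2} ≤ C‖f‖_bmo (John–Nirenberg inequality for little bmo: the L¹-based and L²-based bmo norms are equivalent). -/
open MeasureTheory ENNReal Filter

/-! Fix a rectangle `R` and suppose every rectangle has mean oscillation at most `b`. Bisecting
every side of `R` repeatedly produces its dyadic subrectangles, which are again rectangles, so a
one-parameter Calderón–Zygmund stopping time applies: the maximal dyadic subrectangles `Q` on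
which `|f - f_R|` has average above `4 b` cover at most a quarter of `R`; on each of them
`|f_Q - f_R| ≤ 2 ^ N · 4 b` (`N = ∑ nᵢ`) by comparison with the parent of `Q`; and off them
`|f - f_R| ≤ 4 b` almost everywhere by Lebesgue differentiation along the subrectangles.
Splitting `∫_R |f - f_R|²` accordingly bounds the supremum `X` of the normalised `L²`
oscillations by `X / 2 + O(b²)`, which can be absorbed when `X < ∞`, in particular for bounded
`f`. A general `f` is the pointwise limit of its truncations at height `k`, whose mean
oscillations are at most `2 b`, and Fatou's lemma passes the bound to the limit. -/

open Metric Set Topology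

namespace LittleBMO

noncomputable section

section Averages

variable {α : Type*} [MeasurableSpace α] {μ : Measure α} {s : Set α}

lemma abs_setAverage_le (u : α → ℝ) : |⨍ x in s, u x ∂μ| ≤ ⨍ x in s, |u x| ∂μ :=
  norm_integral_le_integral_norm u

lemma setAverage_sub_const (hs₀ : μ s ≠ 0) (hs : μ s ≠ ∞) {u : α → ℝ}
    (hu : IntegrableOn u s μ) (c : ℝ) :
    ⨍ x in s, (u x - c) ∂μ = (⨍ x in s, u x ∂μ) - c := by
  rw [setAverage_eq, setAverage_eq, integral_sub hu (integrableOn_const hs), setIntegral_const,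
    smul_sub, smul_smul, inv_mul_cancel₀ (measureReal_ne_zero_iff hs |>.mpr hs₀), one_smul]

lemma setAverage_mono_ae {u v : α → ℝ} (hu : IntegrableOn u s μ) (hv : IntegrableOn v s μ)
    (h : u ≤ᵐ[μ.restrict s] v) : ⨍ x in s, u x ∂μ ≤ ⨍ x in s, v x ∂μ := by
  rw [setAverage_eq, setAverage_eq]
  exact smul_le_smul_of_nonneg_left (integral_mono_ae hu hv h) (by positivity)

lemma lintegral_ofReal_eq_mul_setAverage (hs₀ : μ s ≠ 0) (hs : μ s ≠ ∞) {u : α → ℝ}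
    (hu : IntegrableOn u s μ) (hu₀ : 0 ≤ᵐ[μ.restrict s] u) :
    ∫⁻ x in s, ENNReal.ofReal (u x) ∂μ = μ s * ENNReal.ofReal (⨍ x in s, u x ∂μ) := by
  rw [ofReal_setAverage hu hu₀, ENNReal.mul_div_cancel hs₀ hs]

lemma setAverage_abs_sub_setAverage_le (hs₀ : μ s ≠ 0) (hs : μ s ≠ ∞) {g : α → ℝ}
    (hg : IntegrableOn g s μ) (c : ℝ) :
    ⨍ x in s, |g x - ⨍ y in s, g y ∂μ| ∂μ ≤ 2 * ⨍ x in s, |g x - c| ∂μ := by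
  set a := ⨍ y in s, g y ∂μ
  set A := ⨍ x in s, |g x - c| ∂μ
  have hgc : IntegrableOn (fun x => |g x - c|) s μ := (hg.sub (integrableOn_const hs)).abs
  have hga : IntegrableOn (fun x => |g x - a|) s μ := (hg.sub (integrableOn_const hs)).abs
  have hdev : |a - c| ≤ A := by
    rw [← setAverage_sub_const hs₀ hs hg]; exact abs_setAverage_le _
  have h : ⨍ x in s, (|g x - a| - A) ∂μ ≤ A :=
    setAverage_mono_ae (hga.sub (integrableOn_const hs)) hgc (.of_forall fun x => by
      linarith [abs_sub_le (g x) c a, abs_sub_comm c a])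
  rw [setAverage_sub_const hs₀ hs hga] at h
  linarith

variable {ι : Type*} {S : Set ι} {t : ι → Set α} {φ : α → ℝ≥0∞} {a : ℝ≥0∞}

lemma lintegral_biUnion_le_mul (hS : S.Countable) (ht : ∀ i ∈ S, MeasurableSet (t i))
    (hd : S.PairwiseDisjoint t) (h : ∀ i ∈ S, ∫⁻ x in t i, φ x ∂μ ≤ a * μ (t i)) :
    ∫⁻ x in ⋃ i ∈ S, t i, φ x ∂μ ≤ a * μ (⋃ i ∈ S, t i) := by
  rw [lintegral_biUnion hS ht hd, measure_biUnion hS hd ht, ← ENNReal.tsum_mul_left]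
  exact ENNReal.tsum_le_tsum fun i => h i i.2

lemma mul_le_lintegral_biUnion (hS : S.Countable) (ht : ∀ i ∈ S, MeasurableSet (t i))
    (hd : S.PairwiseDisjoint t) (h : ∀ i ∈ S, a * μ (t i) ≤ ∫⁻ x in t i, φ x ∂μ) :
    a * μ (⋃ i ∈ S, t i) ≤ ∫⁻ x in ⋃ i ∈ S, t i, φ x ∂μ := by
  rw [lintegral_biUnion hS ht hd, measure_biUnion hS hd ht, ← ENNReal.tsum_mul_left]
  exact ENNReal.tsum_le_tsum fun i => h i i.2

end Averages

variable {d : ℕ} {n : Fin d → ℕ}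

section Rectangles

lemma cubeSet_eq_pi {m : ℕ} (c : Cube m) :
    cubeSet c = univ.pi fun t => Ico (c.corner t) (c.corner t + c.side) := by
  ext x; simp [cubeSet]

lemma rectSet_eq_pi (R : Rect n) : rectSet R = univ.pi fun i => cubeSet (R i) := by
  ext x; simp [rectSet]

lemma measurableSet_rectSet (R : Rect n) : MeasurableSet (rectSet R) := by
  simp only [rectSet_eq_pi, cubeSet_eq_pi]
  exact .univ_pi fun i => .univ_pi fun t => measurableSet_Ico

lemma volume_rectSet (R : Rect n) :
    volume (rectSet R) = ENNReal.ofReal (∏ i, (R i).side ^ n i) := by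
  have hside := fun i => (R i).side_pos.le
  simp only [rectSet_eq_pi, cubeSet_eq_pi, volume_pi_pi, Real.volume_Ico, add_sub_cancel_left,
    Finset.prod_const, Finset.card_univ, Fintype.card_fin]
  rw [ENNReal.ofReal_prod_of_nonneg fun i _ => pow_nonneg (hside i) _]
  simp only [ENNReal.ofReal_pow (hside _)]

lemma volume_rectSet_ne_zero (R : Rect n) : volume (rectSet R) ≠ 0 := by
  rw [volume_rectSet, ENNReal.ofReal_ne_zero_iff]
  exact Finset.prod_pos fun i _ => pow_pos (R i).side_pos _

lemma volume_rectSet_ne_top (R : Rect n) : volume (rectSet R) ≠ ∞ := by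
  rw [volume_rectSet]; exact ENNReal.ofReal_ne_top

def closedRectSet (R : Rect n) : Set (ProductSpace n) :=
  univ.pi fun i => univ.pi fun t => Icc ((R i).corner t) ((R i).corner t + (R i).side)

lemma isCompact_closedRectSet (R : Rect n) : IsCompact (closedRectSet R) :=
  isCompact_univ_pi fun _ => isCompact_univ_pi fun _ => isCompact_Icc

lemma interior_closedRectSet_nonempty (R : Rect n) : (interior (closedRectSet R)).Nonempty := by
  simp only [closedRectSet, interior_pi_set finite_univ, interior_Icc, univ_pi_nonempty_iff,
    nonempty_Ioo]
  exact fun i _ => lt_add_of_pos_right _ (R i).side_pos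

lemma rectSet_subset_closedRectSet (R : Rect n) : rectSet R ⊆ closedRectSet R :=
  fun _ hx i _ t _ => Ico_subset_Icc_self (hx i t)

lemma rectSet_ae_eq_closedRectSet (R : Rect n) : rectSet R =ᵐ[volume] closedRectSet R := by
  simp only [rectSet_eq_pi, cubeSet_eq_pi, closedRectSet]
  exact Measure.ae_eq_set_pi fun i _ => Measure.ae_eq_set_pi fun t _ => Ico_ae_eq_Icc

lemma volume_closedRectSet (R : Rect n) : volume (closedRectSet R) = volume (rectSet R) :=
  measure_congr (rectSet_ae_eq_closedRectSet R).symm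

lemma integrableOn_rectSet {f : ProductSpace n → ℝ} (hf : LocallyIntegrable f volume)
    (R : Rect n) : IntegrableOn f (rectSet R) volume :=
  (hf.integrableOn_isCompact (isCompact_closedRectSet R)).mono_set
    (rectSet_subset_closedRectSet R)

lemma locallyIntegrable_abs_sub {f : ProductSpace n → ℝ} (hf : LocallyIntegrable f volume)
    (c : ℝ) : LocallyIntegrable (fun y => |f y - c|) volume :=
  have h := hf.sub (locallyIntegrable_const c)
  h.mono (continuous_abs.comp_aestronglyMeasurable h.aestronglyMeasurable)
    (.of_forall fun y => by simp)

lemma exists_subset_rectSet {K : Set (ProductSpace n)} (hK : Bornology.IsBounded K) :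
    ∃ Q : Rect n, K ⊆ rectSet Q := by
  obtain ⟨r, hr⟩ := isBounded_iff_forall_norm_le.1 hK
  refine ⟨fun _ => ⟨fun _ => -(|r| + 1), 2 * (|r| + 1), by positivity⟩, fun x hx i t => ?_⟩
  have hxit := (norm_le_pi_norm (x i) t).trans ((norm_le_pi_norm x i).trans (hr x hx))
  rw [Real.norm_eq_abs, abs_le] at hxit
  constructor <;> linarith [le_abs_self r, hxit.1, hxit.2]

lemma volume_closedBall (x : ProductSpace n) {r : ℝ} (hr : 0 ≤ r) :
    volume (closedBall x r) = ENNReal.ofReal ((2 * r) ^ ∑ i, n i) := by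
  simp only [closedBall_pi x hr, closedBall_pi _ hr, volume_pi_pi, Real.volume_closedBall,
    Finset.prod_const, Finset.card_univ, Fintype.card_fin]
  rw [← Finset.prod_pow_eq_pow_sum, ENNReal.ofReal_prod_of_nonneg fun i _ => by positivity]
  simp only [ENNReal.ofReal_pow (by positivity : (0 : ℝ) ≤ 2 * r)]

lemma volume_closedBall_three_mul (x : ProductSpace n) {r : ℝ} (hr : 0 ≤ r) :
    volume (closedBall x (3 * r)) = ENNReal.ofReal (3 ^ ∑ i, n i) * volume (closedBall x r) := by
  rw [volume_closedBall x (by positivity), volume_closedBall x hr,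
    ← ENNReal.ofReal_mul (by positivity), ← mul_pow]
  ring_nf

end Rectangles

section DyadicChildren

def childRect (R : Rect n) (m : ℕ) (j : ∀ i, Fin (n i) → ℤ) : Rect n := fun i =>
  { corner := fun t => (R i).corner t + j i t * ((R i).side / 2 ^ m)
    side := (R i).side / 2 ^ m
    side_pos := by have := (R i).side_pos; positivity }

def childIndex (R : Rect n) (m : ℕ) (x : ProductSpace n) : ∀ i, Fin (n i) → ℤ :=
  fun i t => ⌊(x i t - (R i).corner t) / ((R i).side / 2 ^ m)⌋

def childAt (R : Rect n) (m : ℕ) (x : ProductSpace n) : Set (ProductSpace n) :=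
  rectSet (childRect R m (childIndex R m x))

variable {R : Rect n} {m m' : ℕ} {x y : ProductSpace n}

lemma mem_childRect_iff {j : ∀ i, Fin (n i) → ℤ} :
    x ∈ rectSet (childRect R m j) ↔ childIndex R m x = j := by
  simp only [rectSet, cubeSet, childRect, childIndex, funext_iff, Int.floor_eq_iff]
  refine forall_congr' fun i => forall_congr' fun t => ?_
  have hs : 0 < (R i).side / 2 ^ m := by have := (R i).side_pos; positivity
  rw [le_div_iff₀ hs, div_lt_iff₀ hs]
  constructor <;> rintro ⟨h1, h2⟩ <;> constructor <;> linarith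

lemma rectSet_childRect_zero (R : Rect n) : rectSet (childRect R 0 0) = rectSet R := by
  ext x; simp [rectSet, cubeSet, childRect]

lemma childIndex_eq_of_le (hm : m' ≤ m) (h : childIndex R m x = childIndex R m y) :
    childIndex R m' x = childIndex R m' y := by
  obtain ⟨k, rfl⟩ := Nat.exists_eq_add_of_le hm
  have hdiv : ∀ z : ProductSpace n,
      childIndex R m' z = fun i t => childIndex R (m' + k) z i t / 2 ^ k := by
    intro z; funext i t
    have hs := (R i).side_pos
    have hw : (z i t - (R i).corner t) / ((R i).side / 2 ^ m') =
        (z i t - (R i).corner t) / ((R i).side / 2 ^ (m' + k)) / ((2 ^ k : ℕ) : ℝ) := by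
      push_cast; field_simp; ring
    simp only [childIndex]
    rw [hw, Int.floor_div_natCast]
    norm_cast
  rw [hdiv x, hdiv y, h]

lemma mem_childAt : y ∈ childAt R m x ↔ childIndex R m y = childIndex R m x :=
  mem_childRect_iff

lemma mem_childAt_self : x ∈ childAt R m x := mem_childAt.mpr rfl

lemma childAt_eq_of_mem (hm : m' ≤ m) (hy : y ∈ childAt R m x) :
    childAt R m' y = childAt R m' x := by
  rw [childAt, childIndex_eq_of_le hm (mem_childAt.mp hy), childAt]

lemma childAt_subset (hm : m' ≤ m) : childAt R m x ⊆ childAt R m' x := fun _ hy =>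
  mem_childAt.mpr (childIndex_eq_of_le hm (mem_childAt.mp hy))

lemma childAt_zero (hx : x ∈ rectSet R) : childAt R 0 x = rectSet R := by
  have h0 : childIndex R 0 x = 0 := by
    rw [← mem_childRect_iff, rectSet_childRect_zero]; exact hx
  rw [childAt, h0, rectSet_childRect_zero]

lemma childAt_subset_rectSet (hx : x ∈ rectSet R) : childAt R m x ⊆ rectSet R :=
  childAt_zero hx ▸ childAt_subset (Nat.zero_le m)

lemma volume_childRect (R : Rect n) (m : ℕ) (j : ∀ i, Fin (n i) → ℤ) :
    volume (rectSet (childRect R m j)) =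
      ENNReal.ofReal ((∏ i, (R i).side ^ n i) / (2 ^ m) ^ ∑ i, n i) := by
  rw [volume_rectSet, ← Finset.prod_pow_eq_pow_sum, ← Finset.prod_div_distrib]
  simp only [childRect, div_pow]

lemma volume_childAt_ne_zero : volume (childAt R m x) ≠ 0 := volume_rectSet_ne_zero _

lemma volume_childAt_ne_top : volume (childAt R m x) ≠ ∞ := volume_rectSet_ne_top _

lemma volume_childAt_eq_mul_succ :
    volume (childAt R m x) = 2 ^ (∑ i, n i) * volume (childAt R (m + 1) x) := by
  rw [childAt, childAt, volume_childRect, volume_childRect,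
    show (2 : ℝ≥0∞) ^ (∑ i, n i) = ENNReal.ofReal (2 ^ ∑ i, n i) by simp,
    ← ENNReal.ofReal_mul (by positivity), pow_succ, mul_pow]
  congr 1
  field_simp

lemma setAverage_childAt_succ_le {u : ProductSpace n → ℝ} (hu : IntegrableOn u (childAt R m x))
    (hu₀ : 0 ≤ u) :
    ⨍ y in childAt R (m + 1) x, u y ≤ 2 ^ (∑ i, n i) * ⨍ y in childAt R m x, u y := by
  have hsub : childAt R (m + 1) x ⊆ childAt R m x := childAt_subset m.le_succ
  have h := lintegral_mono_set (μ := volume) (f := fun y => ENNReal.ofReal (u y)) hsub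
  rw [lintegral_ofReal_eq_mul_setAverage volume_childAt_ne_zero volume_childAt_ne_top
      (hu.mono_set hsub) (.of_forall fun y => hu₀ y),
    lintegral_ofReal_eq_mul_setAverage volume_childAt_ne_zero volume_childAt_ne_top hu
      (.of_forall fun y => hu₀ y),
    volume_childAt_eq_mul_succ (m := m), mul_assoc, mul_left_comm,
    ENNReal.mul_le_mul_iff_right volume_childAt_ne_zero volume_childAt_ne_top,
    ← ENNReal.ofReal_ofNat 2,
    ← ENNReal.ofReal_pow zero_le_two, ← ENNReal.ofReal_mul (by positivity)] at h
  have havg : 0 ≤ ⨍ y in childAt R m x, u y := integral_nonneg hu₀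
  exact (ENNReal.ofReal_le_ofReal_iff (by positivity)).1 h

lemma closedRectSet_childAt_subset_closedBall {S : ℝ} (hS₀ : 0 ≤ S)
    (hS : ∀ i, (R i).side ≤ S) :
    closedRectSet (childRect R m (childIndex R m x)) ⊆ closedBall x (S / 2 ^ m) := by
  intro y hy
  have hx := rectSet_subset_closedRectSet _ (mem_childAt_self (R := R) (m := m) (x := x))
  rw [mem_closedBall, dist_pi_le_iff (by positivity)]
  refine fun i => (dist_pi_le_iff (by positivity)).2 fun t => ?_
  have hyt := hy i (mem_univ i) t (mem_univ t)
  have hxt := hx i (mem_univ i) t (mem_univ t)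
  have hside : (R i).side / 2 ^ m ≤ S / 2 ^ m := by gcongr; exact hS i
  simp only [childRect, mem_Icc] at hyt hxt
  rw [Real.dist_eq, abs_le]
  constructor <;> linarith

theorem ae_tendsto_setAverage_childAt (R : Rect n) {g : ProductSpace n → ℝ}
    (hg : LocallyIntegrable g volume) :
    ∀ᵐ x, Tendsto (fun m => ⨍ y in childAt R m x, g y) atTop (𝓝 (g x)) := by
  set N := ∑ i, n i
  set S := ∑ i, (R i).side
  set P := ∏ i, (R i).side ^ n i
  have hS₀ : 0 ≤ S := Finset.sum_nonneg fun i _ => (R i).side_pos.le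
  have hS : ∀ i, (R i).side ≤ S := fun i =>
    Finset.single_le_sum (fun i _ => (R i).side_pos.le) (Finset.mem_univ i)
  have hP : 0 < P := Finset.prod_pos fun i _ => pow_pos (R i).side_pos _
  have hPS : P ≤ (2 * S) ^ N := by
    rw [← Finset.prod_pow_eq_pow_sum]
    exact Finset.prod_le_prod (fun i _ => pow_nonneg (R i).side_pos.le _)
      fun i _ => pow_le_pow_left₀ (R i).side_pos.le (by linarith [hS i]) _
  -- The children of generation `m` around `x` fill the proportion `1 / C` of the ball of
  -- radius `3 S / 2 ^ m`, and the doubling constant `3 ^ N` of balls is at most `C`.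
  set C : ℝ := (6 * S) ^ N / P
  have hdoubling : ∀ x : ProductSpace n, ∃ᶠ r in 𝓝[>] (0 : ℝ),
      volume (closedBall x (3 * r)) ≤
        (Real.toNNReal C : ℝ≥0∞) * volume (closedBall x r) := by
    refine fun x => Eventually.frequently (eventually_nhdsWithin_of_forall fun r hr => ?_)
    rw [volume_closedBall_three_mul x (le_of_lt hr),
      show (Real.toNNReal C : ℝ≥0∞) = ENNReal.ofReal C from rfl]
    gcongr
    rw [le_div_iff₀ hP, show 6 * S = 3 * (2 * S) by ring, mul_pow]
    gcongr
  set v := Vitali.vitaliFamily volume _ hdoubling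
  have hmem : ∀ x m, closedRectSet (childRect R m (childIndex R m x)) ∈ v.setsAt x := by
    refine fun x m => ⟨(isCompact_closedRectSet _).isClosed, interior_closedRectSet_nonempty _,
      S / 2 ^ m, closedRectSet_childAt_subset_closedBall hS₀ hS, ?_⟩
    rw [volume_closedBall x (by positivity), volume_closedRectSet, volume_childRect,
      show (Real.toNNReal C : ℝ≥0∞) = ENNReal.ofReal C from rfl,
      ← ENNReal.ofReal_mul (by positivity)]
    refine ENNReal.ofReal_le_ofReal (le_of_eq ?_)
    rw [show 2 * (3 * (S / 2 ^ m)) = 6 * S / 2 ^ m by ring, div_pow,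
      show C = (6 * S) ^ N / P from rfl]
    field_simp
    rfl
  have htendsto : ∀ x, Tendsto (fun m => closedRectSet (childRect R m (childIndex R m x)))
      atTop (v.filterAt x) := by
    refine fun x => v.tendsto_filterAt_iff.2 ⟨Eventually.of_forall (hmem x), fun ε hε => ?_⟩
    have hlim : Tendsto (fun m : ℕ => S / 2 ^ m) atTop (𝓝 0) :=
      tendsto_const_nhds.div_atTop (tendsto_pow_atTop_atTop_of_one_lt one_lt_two)
    filter_upwards [hlim.eventually_lt_const hε] with m hm
    exact (closedRectSet_childAt_subset_closedBall hS₀ hS).trans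
      (closedBall_subset_closedBall hm.le)
  filter_upwards [v.ae_tendsto_average hg] with x hx
  exact (hx.comp (htendsto x)).congr fun m =>
    setAverage_congr (rectSet_ae_eq_closedRectSet _).symm

end DyadicChildren

section Stopping

variable (R : Rect n) (u : ProductSpace n → ℝ) (lam : ℝ)

def stoppedAt (m : ℕ) : Set (ProductSpace n) :=
  {x | x ∈ rectSet R ∧ lam < ⨍ y in childAt R m x, u y ∧
    ∀ m' < m, ⨍ y in childAt R m' x, u y ≤ lam}

def badSet : Set (ProductSpace n) := ⋃ m, stoppedAt R u lam m

/-- Generations and indices of the maximal dyadic subrectangles of `R` on which `u` has average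
above `lam`. -/
def stoppingIndices : Set (ℕ × ∀ i, Fin (n i) → ℤ) :=
  {p | ∃ m, ∃ x ∈ stoppedAt R u lam m, (m, childIndex R m x) = p}

variable {R u lam} {m m' : ℕ} {x : ProductSpace n}

lemma childAt_subset_stoppedAt (hx : x ∈ stoppedAt R u lam m) :
    childAt R m x ⊆ stoppedAt R u lam m := by
  intro y hy
  have h : ∀ m' ≤ m, childAt R m' y = childAt R m' x := fun m' hm' => childAt_eq_of_mem hm' hy
  obtain ⟨hxR, hgt, hle⟩ := hx
  exact ⟨childAt_subset_rectSet hxR hy, by rwa [h m le_rfl],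
    fun m' hm' => by rw [h m' hm'.le]; exact hle m' hm'⟩

lemma eq_of_mem_stoppedAt (hx : x ∈ stoppedAt R u lam m) (hx' : x ∈ stoppedAt R u lam m') :
    m = m' := by
  by_contra hne
  rcases Nat.lt_or_gt_of_ne hne with h | h
  · exact (hx'.2.2 m h).not_gt hx.2.1
  · exact (hx.2.2 m' h).not_gt hx'.2.1

lemma badSet_eq_biUnion :
    badSet R u lam = ⋃ p ∈ stoppingIndices R u lam, rectSet (childRect R p.1 p.2) := by
  refine Subset.antisymm (iUnion_subset fun m x hx => ?_) (iUnion₂_subset ?_)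
  · exact mem_biUnion (x := (m, childIndex R m x)) ⟨m, x, hx, rfl⟩ mem_childAt_self
  · rintro _ ⟨m, x, hx, rfl⟩
    exact (childAt_subset_stoppedAt hx).trans (subset_iUnion _ m)

lemma pairwiseDisjoint_stoppingIndices :
    (stoppingIndices R u lam).PairwiseDisjoint fun p => rectSet (childRect R p.1 p.2) := by
  rintro _ ⟨m, x, hx, rfl⟩ _ ⟨m', x', hx', rfl⟩ hne
  refine disjoint_left.2 fun y hy hy' => hne ?_
  have hm : m = m' := eq_of_mem_stoppedAt (childAt_subset_stoppedAt hx hy)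
    (childAt_subset_stoppedAt hx' hy')
  subst hm
  rw [← mem_childAt.1 hy, ← mem_childAt.1 hy']

lemma measurableSet_badSet : MeasurableSet (badSet R u lam) := by
  rw [badSet_eq_biUnion]
  exact .biUnion (to_countable _) fun _ _ => measurableSet_rectSet _

lemma badSet_subset : badSet R u lam ⊆ rectSet R := iUnion_subset fun _ _ hx => hx.1

lemma lintegral_badSet_le_mul {φ : ProductSpace n → ℝ≥0∞} {a : ℝ≥0∞}
    (h : ∀ m, ∀ x ∈ stoppedAt R u lam m,
      ∫⁻ y in childAt R m x, φ y ≤ a * volume (childAt R m x)) :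
    ∫⁻ y in badSet R u lam, φ y ≤ a * volume (badSet R u lam) := by
  rw [badSet_eq_biUnion]
  refine lintegral_biUnion_le_mul (to_countable _) (fun _ _ => measurableSet_rectSet _)
    pairwiseDisjoint_stoppingIndices ?_
  rintro _ ⟨m, x, hx, rfl⟩
  exact h m x hx

lemma mul_le_lintegral_badSet {φ : ProductSpace n → ℝ≥0∞} {a : ℝ≥0∞}
    (h : ∀ m, ∀ x ∈ stoppedAt R u lam m,
      a * volume (childAt R m x) ≤ ∫⁻ y in childAt R m x, φ y) :
    a * volume (badSet R u lam) ≤ ∫⁻ y in badSet R u lam, φ y := by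
  rw [badSet_eq_biUnion]
  refine mul_le_lintegral_biUnion (to_countable _) (fun _ _ => measurableSet_rectSet _)
    pairwiseDisjoint_stoppingIndices ?_
  rintro _ ⟨m, x, hx, rfl⟩
  exact h m x hx

lemma setAverage_childAt_le_of_notMem_badSet (hx : x ∈ rectSet R \ badSet R u lam) (m : ℕ) :
    ⨍ y in childAt R m x, u y ≤ lam := by
  classical
  by_contra! hlt
  have hex : ∃ m, lam < ⨍ y in childAt R m x, u y := ⟨m, hlt⟩
  exact hx.2 (mem_iUnion.2 ⟨Nat.find hex, hx.1, Nat.find_spec hex,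
    fun m' hm' => not_lt.1 (Nat.find_min hex hm')⟩)

lemma ofReal_mul_volume_badSet_le_lintegral (hu : LocallyIntegrable u volume) (hu₀ : 0 ≤ u) :
    ENNReal.ofReal lam * volume (badSet R u lam) ≤
      ∫⁻ y in badSet R u lam, ENNReal.ofReal (u y) := by
  refine mul_le_lintegral_badSet fun m x hx => ?_
  rw [lintegral_ofReal_eq_mul_setAverage volume_childAt_ne_zero volume_childAt_ne_top
    (integrableOn_rectSet hu _) (.of_forall fun y => hu₀ y), mul_comm]
  gcongr
  exact hx.2.1.le

lemma setAverage_childAt_le_of_mem_stoppedAt (hu : LocallyIntegrable u volume) (hu₀ : 0 ≤ u)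
    (hR : ⨍ y in rectSet R, u y ≤ lam)
    (hx : x ∈ stoppedAt R u lam m) :
    ⨍ y in childAt R m x, u y ≤ 2 ^ (∑ i, n i) * lam := by
  cases m with
  | zero => exact absurd (childAt_zero hx.1 ▸ hx.2.1) hR.not_gt
  | succ m =>
    exact (setAverage_childAt_succ_le (integrableOn_rectSet hu _) hu₀).trans
      (by gcongr; exact hx.2.2 m m.lt_succ_self)

lemma ae_le_of_notMem_badSet (hu : LocallyIntegrable u volume) :
    ∀ᵐ x, x ∈ rectSet R \ badSet R u lam → u x ≤ lam := by
  filter_upwards [ae_tendsto_setAverage_childAt R hu] with x hx hxG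
  exact le_of_tendsto hx (.of_forall (setAverage_childAt_le_of_notMem_badSet hxG))

end Stopping

section MeanOscillation

def meanOsc (f : ProductSpace n → ℝ) (Q : Rect n) : ℝ :=
  ⨍ y in rectSet Q, |f y - ⨍ z in rectSet Q, f z|

def meanSqOsc (f : ProductSpace n → ℝ) (Q : Rect n) : ℝ≥0∞ :=
  (volume (rectSet Q))⁻¹ *
    ∫⁻ x in rectSet Q, ENNReal.ofReal ((f x - ⨍ y in rectSet Q, f y) ^ 2)

variable {f : ProductSpace n → ℝ}

lemma lintegral_sq_sub_setAverage (f : ProductSpace n → ℝ) (Q : Rect n) :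
    ∫⁻ x in rectSet Q, ENNReal.ofReal ((f x - ⨍ y in rectSet Q, f y) ^ 2) =
      meanSqOsc f Q * volume (rectSet Q) := by
  rw [meanSqOsc, mul_comm, ← mul_assoc,
    ENNReal.mul_inv_cancel (volume_rectSet_ne_zero Q) (volume_rectSet_ne_top Q), one_mul]

lemma lintegral_sq_sub_le {Q : Rect n} {c K : ℝ} (hK : |(⨍ y in rectSet Q, f y) - c| ≤ K) :
    ∫⁻ x in rectSet Q, ENNReal.ofReal ((f x - c) ^ 2) ≤
      (2 * meanSqOsc f Q + ENNReal.ofReal (2 * K ^ 2)) * volume (rectSet Q) := by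
  set fQ := ⨍ y in rectSet Q, f y
  have hpt : ∀ x, ENNReal.ofReal ((f x - c) ^ 2) ≤
      2 * ENNReal.ofReal ((f x - fQ) ^ 2) + ENNReal.ofReal (2 * K ^ 2) := by
    intro x
    have hsq : (fQ - c) ^ 2 ≤ K ^ 2 := sq_le_sq' (abs_le.1 hK).1 (abs_le.1 hK).2
    rw [← ENNReal.ofReal_ofNat 2, ← ENNReal.ofReal_mul zero_le_two,
      ← ENNReal.ofReal_add (by positivity) (by positivity)]
    exact ENNReal.ofReal_le_ofReal (by nlinarith [sq_nonneg (f x - fQ - (fQ - c))])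
  calc ∫⁻ x in rectSet Q, ENNReal.ofReal ((f x - c) ^ 2)
      ≤ ∫⁻ x in rectSet Q,
          (2 * ENNReal.ofReal ((f x - fQ) ^ 2) + ENNReal.ofReal (2 * K ^ 2)) :=
        lintegral_mono hpt
    _ = (2 * meanSqOsc f Q + ENNReal.ofReal (2 * K ^ 2)) * volume (rectSet Q) := by
        rw [lintegral_add_right _ measurable_const, lintegral_const_mul' _ _ ENNReal.ofNat_ne_top,
          lintegral_sq_sub_setAverage, setLIntegral_const]
        ring

lemma meanSqOsc_le_of_abs_le (hf : LocallyIntegrable f volume) {M : ℝ} (hM : ∀ x, |f x| ≤ M)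
    (Q : Rect n) : meanSqOsc f Q ≤ ENNReal.ofReal ((2 * M) ^ 2) := by
  have h0 := volume_rectSet_ne_zero Q
  have htop := volume_rectSet_ne_top Q
  have havg : |⨍ y in rectSet Q, f y| ≤ M := calc
    _ ≤ ⨍ y in rectSet Q, |f y| := abs_setAverage_le f
    _ ≤ ⨍ _ in rectSet Q, M :=
        setAverage_mono_ae (integrableOn_rectSet hf Q).abs (integrableOn_const htop) (.of_forall hM)
    _ = M := setAverage_const h0 htop M
  calc meanSqOsc f Q
      ≤ (volume (rectSet Q))⁻¹ * ∫⁻ _ in rectSet Q, ENNReal.ofReal ((2 * M) ^ 2) := by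
        refine mul_le_mul_right (lintegral_mono fun x => ENNReal.ofReal_le_ofReal ?_) _
        rw [← sq_abs]
        exact pow_le_pow_left₀ (abs_nonneg _)
          ((abs_sub _ _).trans (by linarith [hM x])) 2
    _ = ENNReal.ofReal ((2 * M) ^ 2) := by
        rw [setLIntegral_const, mul_left_comm, ENNReal.inv_mul_cancel h0 htop, mul_one]

lemma ofReal_meanOsc (hf : LocallyIntegrable f volume) (Q : Rect n) :
    ENNReal.ofReal (meanOsc f Q) = (volume (rectSet Q))⁻¹ *
      ∫⁻ x in rectSet Q, ENNReal.ofReal |f x - ⨍ y in rectSet Q, f y| := by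
  rw [lintegral_ofReal_eq_mul_setAverage (volume_rectSet_ne_zero Q) (volume_rectSet_ne_top Q)
    (integrableOn_rectSet (locallyIntegrable_abs_sub hf _) Q) (.of_forall fun _ => abs_nonneg _),
    ← mul_assoc, ENNReal.inv_mul_cancel (volume_rectSet_ne_zero Q) (volume_rectSet_ne_top Q),
    one_mul, meanOsc]

lemma meanOsc_le_toReal_bmo1 (hf : LocallyIntegrable f volume) (hbmo : bmo1 f ≠ ∞)
    (Q : Rect n) : meanOsc f Q ≤ (bmo1 f).toReal :=
  (ENNReal.ofReal_le_iff_le_toReal hbmo).1 ((ofReal_meanOsc hf Q).trans_le (le_iSup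
    (fun R : Rect n => (volume (rectSet R))⁻¹ *
      ∫⁻ x in rectSet R, ENNReal.ofReal |f x - ⨍ y in rectSet R, f y|) Q))

lemma integrableOn_sq_rectSet (hf : LocallyIntegrable f volume) {Q : Rect n}
    (hQ : meanSqOsc f Q ≠ ∞) : IntegrableOn (fun x => f x ^ 2) (rectSet Q) := by
  set c := ⨍ y in rectSet Q, f y
  have hfin : ∫⁻ x in rectSet Q, ENNReal.ofReal ((f x - c) ^ 2) < ∞ := by
    rw [lintegral_sq_sub_setAverage]
    exact ENNReal.mul_lt_top hQ.lt_top (volume_rectSet_ne_top Q).lt_top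
  have hsq : IntegrableOn (fun x => (f x - c) ^ 2) (rectSet Q) :=
    ⟨(hf.aestronglyMeasurable.sub aestronglyMeasurable_const).pow 2 |>.restrict,
      (hasFiniteIntegral_iff_ofReal (.of_forall fun _ => sq_nonneg _)).2 hfin⟩
  refine ((hsq.add ((integrableOn_rectSet hf Q).const_mul (2 * c))).sub
    (integrableOn_const (C := c ^ 2) (volume_rectSet_ne_top Q))).congr (.of_forall fun x => ?_)
  simp only [Pi.add_apply, Pi.sub_apply]
  ring

end MeanOscillation

section CalderonZygmund

variable {f : ProductSpace n → ℝ} {b : ℝ} {R : Rect n}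

local notation "𝔅" => badSet R (fun y => |f y - ⨍ z in rectSet R, f z|) (4 * b)

lemma four_mul_volume_badSet_le (hf : LocallyIntegrable f volume) (hb : 0 < b)
    (hR : meanOsc f R ≤ b) :
    4 * volume (𝔅) ≤
      volume (rectSet R) := by
  have hu := locallyIntegrable_abs_sub hf (⨍ z in rectSet R, f z)
  have h := (ofReal_mul_volume_badSet_le_lintegral (R := R) (lam := 4 * b) hu
    fun y => abs_nonneg _).trans
    (lintegral_mono_set badSet_subset)
  rw [lintegral_ofReal_eq_mul_setAverage (volume_rectSet_ne_zero R) (volume_rectSet_ne_top R)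
    (integrableOn_rectSet hu R) (.of_forall fun y => abs_nonneg _),
    ENNReal.ofReal_mul zero_le_four, ENNReal.ofReal_ofNat, mul_assoc, mul_left_comm] at h
  rw [← ENNReal.mul_le_mul_iff_right (ENNReal.ofReal_pos.2 hb).ne' ENNReal.ofReal_ne_top]
  exact h.trans (by rw [mul_comm]; gcongr; exact hR)

lemma lintegral_sq_badSet_le (hf : LocallyIntegrable f volume) (hb : 0 < b)
    (hosc : ∀ Q, meanOsc f Q ≤ b) {X : ℝ≥0∞} (hX : ∀ Q, meanSqOsc f Q ≤ X) :
    ∫⁻ x in 𝔅,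
        ENNReal.ofReal ((f x - ⨍ y in rectSet R, f y) ^ 2) ≤
      (2 * X + ENNReal.ofReal (2 * (2 ^ (∑ i, n i) * (4 * b)) ^ 2)) *
        volume (𝔅) := by
  have hu := locallyIntegrable_abs_sub hf (⨍ z in rectSet R, f z)
  refine lintegral_badSet_le_mul fun m x hx => ?_
  set Q := childRect R m (childIndex R m x)
  have havg := setAverage_childAt_le_of_mem_stoppedAt hu (fun y => abs_nonneg _)
    ((hosc R).trans (by linarith)) hx
  have hK : |(⨍ y in rectSet Q, f y) - ⨍ z in rectSet R, f z| ≤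
      2 ^ (∑ i, n i) * (4 * b) := by
    rw [← setAverage_sub_const (volume_rectSet_ne_zero Q) (volume_rectSet_ne_top Q)
      (integrableOn_rectSet hf Q)]
    exact (abs_setAverage_le _).trans havg
  exact (lintegral_sq_sub_le hK).trans (mul_le_mul_left (by gcongr; exact hX Q) _)

lemma lintegral_sq_rectSet_diff_badSet_le (hf : LocallyIntegrable f volume) :
    ∫⁻ x in rectSet R \ 𝔅,
        ENNReal.ofReal ((f x - ⨍ y in rectSet R, f y) ^ 2) ≤
      ENNReal.ofReal ((4 * b) ^ 2) * volume (rectSet R) := by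
  have hu := locallyIntegrable_abs_sub hf (⨍ z in rectSet R, f z)
  have hmeas : MeasurableSet (rectSet R \ 𝔅) :=
    (measurableSet_rectSet R).diff measurableSet_badSet
  calc _ ≤ ∫⁻ _ in rectSet R \ 𝔅,
          ENNReal.ofReal ((4 * b) ^ 2) := by
        refine lintegral_mono_ae ((ae_restrict_iff' hmeas).2 ?_)
        filter_upwards [ae_le_of_notMem_badSet hu] with x hx hxG
        rw [← sq_abs]
        exact ENNReal.ofReal_le_ofReal (pow_le_pow_left₀ (abs_nonneg _) (hx hxG) 2)
    _ ≤ _ := by rw [setLIntegral_const]; gcongr; exact sdiff_subset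

lemma four_mul_meanSqOsc_le (hf : LocallyIntegrable f volume) (hb : 0 < b)
    (hosc : ∀ Q, meanOsc f Q ≤ b) {X : ℝ≥0∞} (hX : ∀ Q, meanSqOsc f Q ≤ X) :
    4 * meanSqOsc f R ≤ 2 * X + ENNReal.ofReal (2 * (2 ^ (∑ i, n i) * (4 * b)) ^ 2) +
      4 * ENNReal.ofReal ((4 * b) ^ 2) := by
  rw [← ENNReal.mul_le_mul_iff_left (volume_rectSet_ne_zero R) (volume_rectSet_ne_top R),
    mul_assoc, ← lintegral_sq_sub_setAverage,
    ← lintegral_inter_add_sdiff _ _ (measurableSet_badSet : MeasurableSet 𝔅),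
    inter_eq_right.2 badSet_subset, mul_add, add_mul, mul_assoc 4]
  refine add_le_add ?_ (mul_le_mul_right (lintegral_sq_rectSet_diff_badSet_le hf) 4)
  calc _ ≤ 4 * ((2 * X + ENNReal.ofReal (2 * (2 ^ (∑ i, n i) * (4 * b)) ^ 2)) *
        volume (𝔅)) :=
        mul_le_mul_right (lintegral_sq_badSet_le hf hb hosc hX) 4
    _ ≤ _ := by
        rw [mul_left_comm]
        exact mul_le_mul_right (four_mul_volume_badSet_le hf hb (hosc R)) _

lemma meanSqOsc_le_of_abs_le_of_meanOsc_le (hf : LocallyIntegrable f volume) {M : ℝ}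
    (hM : ∀ x, |f x| ≤ M) (hb : 0 < b) (hosc : ∀ Q, meanOsc f Q ≤ b) (Q : Rect n) :
    meanSqOsc f Q ≤ ENNReal.ofReal ((16 * 4 ^ (∑ i, n i) + 32) * b ^ 2) := by
  set X := ⨆ Q, meanSqOsc f Q
  have hX : ∀ Q, meanSqOsc f Q ≤ X := le_iSup (meanSqOsc f)
  have hXtop : X ≠ ∞ :=
    ne_top_of_le_ne_top ENNReal.ofReal_ne_top (iSup_le (meanSqOsc_le_of_abs_le hf hM))
  have habsorb : 2 * X + 2 * X ≤ 2 * X + (ENNReal.ofReal (2 * (2 ^ (∑ i, n i) * (4 * b)) ^ 2) +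
      4 * ENNReal.ofReal ((4 * b) ^ 2)) := by
    rw [← add_mul, ← add_assoc, two_add_two_eq_four, ENNReal.mul_iSup]
    exact iSup_le fun _ => four_mul_meanSqOsc_le hf hb hosc hX
  have hconst : ENNReal.ofReal (2 * (2 ^ (∑ i, n i) * (4 * b)) ^ 2) +
      4 * ENNReal.ofReal ((4 * b) ^ 2) =
      2 * ENNReal.ofReal ((16 * 4 ^ (∑ i, n i) + 32) * b ^ 2) := by
    rw [← ENNReal.ofReal_ofNat 4, ← ENNReal.ofReal_ofNat 2, ← ENNReal.ofReal_mul (by norm_num),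
      ← ENNReal.ofReal_add (by positivity) (by positivity), ← ENNReal.ofReal_mul zero_le_two]
    congr 1
    rw [mul_pow, ← pow_mul, mul_comm _ 2, pow_mul]
    ring
  refine (hX Q).trans ((ENNReal.mul_le_mul_iff_right two_ne_zero ENNReal.ofNat_ne_top).1 ?_)
  exact hconst ▸ ENNReal.le_of_add_le_add_left (ENNReal.mul_ne_top ENNReal.ofNat_ne_top hXtop)
    habsorb

end CalderonZygmund

section Truncation

def clamp (k t : ℝ) : ℝ := max (min t k) (-k)

lemma abs_clamp_sub_clamp_le (k s t : ℝ) : |clamp k s - clamp k t| ≤ |s - t| :=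
  (abs_max_sub_max_le_abs _ _ _).trans
    ((abs_min_sub_min_le_max _ _ _ _).trans (by simp))

variable {k : ℝ}

lemma abs_clamp_le (hk : 0 ≤ k) (t : ℝ) : |clamp k t| ≤ k :=
  abs_le.2 ⟨le_max_right _ _, max_le (min_le_right _ _) (by linarith)⟩

lemma abs_clamp_le_abs (hk : 0 ≤ k) (t : ℝ) : |clamp k t| ≤ |t| := by
  simpa [clamp, hk] using abs_clamp_sub_clamp_le k t 0

lemma clamp_eq_self {t : ℝ} (h : |t| ≤ k) : clamp k t = t := by
  rw [clamp, min_eq_left (abs_le.1 h).2, max_eq_left (abs_le.1 h).1]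

lemma continuous_clamp (k : ℝ) : Continuous (clamp k) := by
  unfold clamp; fun_prop

variable {f : ProductSpace n → ℝ} {b : ℝ}

lemma locallyIntegrable_clamp_comp (hk : 0 ≤ k) (hf : LocallyIntegrable f volume) :
    LocallyIntegrable (fun x => clamp k (f x)) volume :=
  hf.mono ((continuous_clamp k).comp_aestronglyMeasurable hf.aestronglyMeasurable)
    (.of_forall fun x => abs_clamp_le_abs hk (f x))

lemma meanOsc_clamp_comp_le (hk : 0 ≤ k) (hf : LocallyIntegrable f volume) (Q : Rect n) :
    meanOsc (fun x => clamp k (f x)) Q ≤ 2 * meanOsc f Q := by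
  have h0 := volume_rectSet_ne_zero Q
  have htop := volume_rectSet_ne_top Q
  refine (setAverage_abs_sub_setAverage_le h0 htop
    (integrableOn_rectSet (locallyIntegrable_clamp_comp hk hf) Q)
    (clamp k (⨍ y in rectSet Q, f y))).trans (mul_le_mul_of_nonneg_left ?_ zero_le_two)
  exact setAverage_mono_ae
    (((integrableOn_rectSet (locallyIntegrable_clamp_comp hk hf) Q).sub
      (integrableOn_const htop)).abs)
    ((integrableOn_rectSet hf Q).sub (integrableOn_const htop)).abs
    (.of_forall fun x => abs_clamp_sub_clamp_le k _ _)

lemma meanSqOsc_le_of_tendsto {Q : Rect n} {g : ℕ → ProductSpace n → ℝ}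
    (hf : LocallyIntegrable f volume) (hgm : ∀ k, AEStronglyMeasurable (g k) volume)
    (hgf : ∀ k x, |g k x| ≤ |f x|) (hlim : ∀ x, Tendsto (fun k => g k x) atTop (𝓝 (f x)))
    {B : ℝ≥0∞} (hB : ∀ k, meanSqOsc (g k) Q ≤ B) : meanSqOsc f Q ≤ B := by
  have havg :
      Tendsto (fun k => ⨍ y in rectSet Q, g k y) atTop (𝓝 (⨍ y in rectSet Q, f y)) := by
    simp only [setAverage_eq]
    exact (tendsto_integral_of_dominated_convergence (fun y => |f y|)
      (fun k => (hgm k).restrict) (integrableOn_rectSet hf Q).abs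
      (fun k => .of_forall (hgf k)) (.of_forall hlim)).const_smul _
  have hfatou : ∫⁻ x in rectSet Q, ENNReal.ofReal ((f x - ⨍ y in rectSet Q, f y) ^ 2) ≤
      liminf (fun k => ∫⁻ x in rectSet Q,
        ENNReal.ofReal ((g k x - ⨍ y in rectSet Q, g k y) ^ 2)) atTop := calc
    _ = ∫⁻ x in rectSet Q, liminf (fun k =>
          ENNReal.ofReal ((g k x - ⨍ y in rectSet Q, g k y) ^ 2)) atTop :=
        lintegral_congr fun x =>
          ((ENNReal.tendsto_ofReal (((hlim x).sub havg).pow 2)).liminf_eq).symm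
    _ ≤ _ := lintegral_liminf_le' fun k =>
        ((((hgm k).aemeasurable.sub aemeasurable_const).pow_const 2).ennreal_ofReal).restrict
  have hbound : liminf (fun k => ∫⁻ x in rectSet Q,
      ENNReal.ofReal ((g k x - ⨍ y in rectSet Q, g k y) ^ 2)) atTop ≤
      B * volume (rectSet Q) :=
    liminf_le_of_frequently_le' (.of_forall fun k =>
      (lintegral_sq_sub_setAverage (g k) Q).trans_le (mul_le_mul_left (hB k) _))
  calc meanSqOsc f Q ≤ (volume (rectSet Q))⁻¹ * (B * volume (rectSet Q)) :=
        mul_le_mul_right (hfatou.trans hbound) _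
    _ = B := by
        rw [mul_left_comm, ENNReal.inv_mul_cancel (volume_rectSet_ne_zero Q)
          (volume_rectSet_ne_top Q), mul_one]

lemma meanSqOsc_le_of_meanOsc_le_of_pos (hf : LocallyIntegrable f volume) (hb : 0 < b)
    (hosc : ∀ Q, meanOsc f Q ≤ b) (Q : Rect n) :
    meanSqOsc f Q ≤ ENNReal.ofReal ((16 * 4 ^ (∑ i, n i) + 32) * (2 * b) ^ 2) := by
  refine meanSqOsc_le_of_tendsto (g := fun k x => clamp k (f x)) hf
    (fun k => (continuous_clamp k).comp_aestronglyMeasurable hf.aestronglyMeasurable)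
    (fun k x => abs_clamp_le_abs k.cast_nonneg _)
    (fun x => tendsto_atTop_of_eventually_const (i₀ := ⌈|f x|⌉₊) fun k hk =>
      clamp_eq_self ((Nat.le_ceil _).trans (by exact_mod_cast hk))) fun k => ?_
  exact meanSqOsc_le_of_abs_le_of_meanOsc_le (locallyIntegrable_clamp_comp k.cast_nonneg hf)
    (fun x => abs_clamp_le k.cast_nonneg _) (by positivity)
    (fun Q => (meanOsc_clamp_comp_le k.cast_nonneg hf Q).trans (by linarith [hosc Q])) Q

theorem meanSqOsc_le_of_meanOsc_le (hf : LocallyIntegrable f volume) (hb : 0 ≤ b)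
    (hosc : ∀ Q, meanOsc f Q ≤ b) (Q : Rect n) :
    meanSqOsc f Q ≤ ENNReal.ofReal ((64 * 4 ^ (∑ i, n i) + 128) * b ^ 2) := by
  have hlim : Tendsto (fun ε => ENNReal.ofReal ((16 * 4 ^ (∑ i, n i) + 32) * (2 * (b + ε)) ^ 2))
      (𝓝[>] 0) (𝓝 (ENNReal.ofReal ((64 * 4 ^ (∑ i, n i) + 128) * b ^ 2))) := by
    refine ENNReal.tendsto_ofReal (Tendsto.mono_left ?_ nhdsWithin_le_nhds)
    convert ((continuous_const_add b).tendsto 0).const_mul 2 |>.pow 2 |>.const_mul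
      (16 * 4 ^ (∑ i, n i) + 32 : ℝ) using 2
    ring
  exact ge_of_tendsto hlim (eventually_nhdsWithin_of_forall fun ε (hε : 0 < ε) =>
    meanSqOsc_le_of_meanOsc_le_of_pos hf (by linarith) (fun Q => (hosc Q).trans (by linarith)) Q)

end Truncation

end

end LittleBMO

open LittleBMO in
theorem statement12_general {d : ℕ} (n : Fin d → ℕ) :
    ∃ C > (0 : ℝ), ∀ f : ProductSpace n → ℝ, LocallyIntegrable f volume → bmo1 f ≠ ⊤ →
      (∀ K : Set (ProductSpace n), IsCompact K → IntegrableOn (fun x => f x ^ 2) K) ∧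
        bmo2 f ≤ ENNReal.ofReal C * bmo1 f := by
  set A : ℝ := 64 * 4 ^ (∑ i, n i) + 128
  refine ⟨√A, by positivity, fun f hf hbmo => ?_⟩
  have hsq := meanSqOsc_le_of_meanOsc_le hf ENNReal.toReal_nonneg (meanOsc_le_toReal_bmo1 hf hbmo)
  refine ⟨fun K hK => ?_, iSup_le fun Q => ?_⟩
  · obtain ⟨Q, hKQ⟩ := exists_subset_rectSet hK.isBounded
    exact (integrableOn_sq_rectSet hf (ne_top_of_le_ne_top ENNReal.ofReal_ne_top (hsq Q))).mono_set
      hKQ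
  · calc meanSqOsc f Q ^ (1 / 2 : ℝ)
          ≤ ENNReal.ofReal (A * (bmo1 f).toReal ^ 2) ^ (1 / 2 : ℝ) := by gcongr; exact hsq Q
      _ = ENNReal.ofReal √A * bmo1 f := by
          rw [ENNReal.ofReal_rpow_of_nonneg (by positivity) (by norm_num), ← Real.sqrt_eq_rpow,
            Real.sqrt_mul' _ (sq_nonneg _), Real.sqrt_sq ENNReal.toReal_nonneg,
            ENNReal.ofReal_mul (Real.sqrt_nonneg _), ENNReal.ofReal_toReal hbmo]

/-- John–Nirenberg for little `bmo`: there is `C > 0` depending only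
on the dimensions such that every locally integrable `f` with finite little `bmo` norm
is in `L²_loc` and satisfies `‖f‖_{bmo,2} ≤ C‖f‖_bmo`. -/
theorem statement12 {d : ℕ} (hd : 1 ≤ d) (n : Fin d → ℕ) (hn : ∀ i, 1 ≤ n i) :
    ∃ C > (0 : ℝ), ∀ f : ProductSpace n → ℝ, LocallyIntegrable f volume → bmo1 f ≠ ⊤ →
      (∀ K : Set (ProductSpace n), IsCompact K → IntegrableOn (fun x => f x ^ 2) K) ∧
        bmo2 f ≤ ENNReal.ofReal C * bmo1 f :=
  statement12_general n
end

section
/- Let μ be a σ-finite measure, let X be a reflexive Banach space, and let T : X → L¹(μ) be an injective bounded linear map. Suppose (f_m) is a sequence in X with sup_m ‖f_m‖_X < ∞ and the functions T f_m converge μ-almost everywhere to a measurable function g. Then there exists f ∈ X with T f = g μ-a.e., ‖f‖_X ≤ liminf_m ‖f_m‖_X, and f_m → f in the weak topology of X. -/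
open MeasureTheory Filter Set

open scoped Topology

/-!
By reflexivity, a bounded sequence has a weak limit `x_U` along every ultrafilter `U` finer than
`atTop`: the functional `Λ ↦ lim_U Λ (f m)` on the dual is bounded, hence an evaluation. By
Mazur's lemma `x_U` is a norm limit of convex combinations `y_N` of the tails `(f m)_{m ≥ N}`.
Pointwise, convex combinations of tails of a convergent sequence converge to the same limit, so
`T y_N → g` a.e.; since also `T y_N → T x_U` in `L¹`, a subsequence gives `T x_U = g` a.e. By
injectivity of `T` all the `x_U` coincide, so `f m → x` weakly along `atTop`, and weak lower
semicontinuity of the norm bounds `‖x‖`.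
-/

section WeakLimits

variable {𝕜 X : Type*} [RCLike 𝕜] [NormedAddCommGroup X] [NormedSpace 𝕜 X]

theorem exists_forall_tendsto_dual_of_surjective_inclusionInDoubleDual
    (hrefl : Function.Surjective (NormedSpace.inclusionInDoubleDual 𝕜 X))
    {ι : Type*} (U : Ultrafilter ι) {f : ι → X} {M : ℝ} (hM : ∀ i, ‖f i‖ ≤ M) :
    ∃ x : X, ∀ Λ : StrongDual 𝕜 X, Tendsto (fun i => Λ (f i)) U (𝓝 (Λ x)) := by
  set K := univ.pi fun Λ : StrongDual 𝕜 X => Metric.closedBall (0 : 𝕜) (‖Λ‖ * M)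
  have hK : IsCompact K := isCompact_univ_pi fun Λ => isCompact_closedBall _ _
  have hmem : ∀ i, (fun Λ : StrongDual 𝕜 X => Λ (f i)) ∈ K :=
    fun i Λ _ => mem_closedBall_zero_iff.2 (Λ.le_of_opNorm_le_of_le le_rfl (hM i))
  obtain ⟨φ, -, hφ⟩ := hK.ultrafilter_le_nhds (U.map fun i Λ => Λ (f i))
    (le_principal_iff.2 (Ultrafilter.mem_map.2 (univ_mem' hmem)))
  replace hφ : Tendsto (fun i Λ => Λ (f i)) U (𝓝 φ) := hφ
  have hbdd : Bornology.IsBounded (range fun i => NormedSpace.inclusionInDoubleDual 𝕜 X (f i)) :=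
    isBounded_iff_forall_norm_le.2
      ⟨M, forall_mem_range.2 fun i => (NormedSpace.double_dual_bound 𝕜 X (f i)).trans (hM i)⟩
  obtain ⟨x, hx⟩ := hrefl (ContinuousLinearMap.ofTendstoOfBoundedRange φ _ hφ hbdd)
  refine ⟨x, fun Λ => ?_⟩
  rw [show Λ x = φ Λ from DFunLike.congr_fun hx Λ]
  exact tendsto_pi_nhds.1 hφ Λ

theorem norm_le_liminf_of_forall_tendsto_dual {ι : Type*} {l : Filter ι} [l.NeBot]
    {f : ι → X} {x : X} {M : ℝ} (hM : ∀ i, ‖f i‖ ≤ M)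
    (hx : ∀ Λ : StrongDual 𝕜 X, Tendsto (fun i => Λ (f i)) l (𝓝 (Λ x))) :
    ‖x‖ ≤ liminf (fun i => ‖f i‖) l := by
  obtain ⟨Λ, hΛ, hΛx⟩ := exists_dual_vector'' 𝕜 x
  have hre : Tendsto (fun i => RCLike.re (Λ (f i))) l (𝓝 ‖x‖) := by
    simpa [Function.comp_def, hΛx] using (RCLike.continuous_re.tendsto _).comp (hx Λ)
  rw [← hre.liminf_eq]
  refine liminf_le_liminf (Eventually.of_forall fun i => ?_) hre.isBoundedUnder_ge
    (isBoundedUnder_of ⟨M, hM⟩).isCoboundedUnder_ge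
  calc RCLike.re (Λ (f i)) ≤ ‖Λ (f i)‖ := RCLike.re_le_norm _
    _ ≤ ‖f i‖ := Λ.le_of_opNorm_le hΛ (f i) |>.trans_eq (one_mul _)

end WeakLimits

theorem mem_closure_convexHull_image_of_forall_tendsto_dual {X : Type*} [NormedAddCommGroup X]
    [NormedSpace ℝ X] {ι : Type*} {l : Filter ι} [l.NeBot] {f : ι → X} {x : X}
    (hx : ∀ Λ : StrongDual ℝ X, Tendsto (fun i => Λ (f i)) l (𝓝 (Λ x))) {s : Set ι} (hs : s ∈ l) :
    x ∈ closure (convexHull ℝ (f '' s)) := by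
  by_contra hnot
  obtain ⟨Λ, u, hlt, hux⟩ := geometric_hahn_banach_closed_point
    (convex_convexHull ℝ _).closure isClosed_closure hnot
  have hev : ∀ᶠ i in l, Λ (f i) ≤ u := Filter.mem_of_superset hs fun i hi =>
    (hlt _ (subset_closure (subset_convexHull ℝ _ (mem_image_of_mem f hi)))).le
  exact hux.not_ge (le_of_tendsto (hx Λ) hev)

theorem Filter.Tendsto.of_forall_mem_convexHull_image_Ici {E : Type*} [SeminormedAddCommGroup E]
    [NormedSpace ℝ E] {u v : ℕ → E} {L : E} (hu : Tendsto u atTop (𝓝 L))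
    (hv : ∀ N, v N ∈ convexHull ℝ (u '' Ici N)) : Tendsto v atTop (𝓝 L) := by
  refine Metric.nhds_basis_closedBall.tendsto_right_iff.2 fun ε hε => ?_
  obtain ⟨N₀, hN₀⟩ := eventually_atTop.1 (Metric.closedBall_mem_nhds L hε |> hu)
  refine eventually_atTop.2 ⟨N₀, fun N hN => ?_⟩
  refine convexHull_min ?_ (convex_closedBall L ε) (hv N)
  exact image_subset_iff.2 fun m hm => hN₀ m (hN.trans hm)

theorem Metric.exists_seq_tendsto_of_forall_mem_closure {Y : Type*} [PseudoMetricSpace Y]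
    {s : ℕ → Set Y} {x : Y} (hx : ∀ N, x ∈ closure (s N)) :
    ∃ y : ℕ → Y, (∀ N, y N ∈ s N) ∧ Tendsto y atTop (𝓝 x) := by
  choose y hys hyx using fun N => Metric.mem_closure_iff.1 (hx N) _ Nat.one_div_pos_of_nat
  refine ⟨y, hys, tendsto_iff_dist_tendsto_zero.2 ?_⟩
  exact squeeze_zero (fun _ => dist_nonneg) (fun N => by rw [dist_comm]; exact (hyx N).le)
    tendsto_one_div_add_atTop_nhds_zero_nat

namespace MeasureTheory.Lp

variable {α E : Type*} [MeasurableSpace α] {μ : Measure α} [NormedAddCommGroup E] {p : ENNReal}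

theorem ae_mem_convexHull_image [NormedSpace ℝ E] {ι : Type*} {F : ι → Lp E p μ} {s : Set ι}
    {h : Lp E p μ} (hh : h ∈ convexHull ℝ (F '' s)) :
    ∀ᵐ a ∂μ, h a ∈ convexHull ℝ ((fun i => F i a) '' s) := by
  refine convexHull_min (t := {h : Lp E p μ | ∀ᵐ a ∂μ, h a ∈ convexHull ℝ ((fun i => F i a) '' s)})
    ?_ ?_ hh
  · rintro _ ⟨i, hi, rfl⟩
    exact ae_of_all μ fun a => subset_convexHull ℝ _ (mem_image_of_mem (fun i => F i a) hi)
  · intro h₁ hh₁ h₂ hh₂ c d hc hd hcd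
    filter_upwards [hh₁, hh₂, Lp.coeFn_add (c • h₁) (d • h₂), Lp.coeFn_smul (c : ℝ) h₁,
      Lp.coeFn_smul d h₂] with a ha₁ ha₂ hadd hsmul₁ hsmul₂
    simp only [hadd, Pi.add_apply, hsmul₁, hsmul₂, Pi.smul_apply]
    exact convex_convexHull ℝ _ ha₁ ha₂ hc hd hcd

theorem ae_eq_of_tendsto_of_ae_tendsto [Fact (1 ≤ p)] {h : ℕ → Lp E p μ} {h₀ : Lp E p μ}
    {g : α → E} (hh : Tendsto h atTop (𝓝 h₀))
    (hg : ∀ᵐ a ∂μ, Tendsto (fun n => h n a) atTop (𝓝 (g a))) : h₀ =ᵐ[μ] g := by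
  obtain ⟨ns, hns, hae⟩ := (tendstoInMeasure_of_tendsto_Lp hh).exists_seq_tendsto_ae
  filter_upwards [hae, hg] with a ha hga
  exact tendsto_nhds_unique ha (hga.comp hns.tendsto_atTop)

end MeasureTheory.Lp

theorem ContinuousLinearMap.ae_eq_of_forall_tendsto_dual_of_ae_tendsto {X α E : Type*}
    [NormedAddCommGroup X] [NormedSpace ℝ X] [MeasurableSpace α] {μ : Measure α}
    [NormedAddCommGroup E] [NormedSpace ℝ E] {p : ENNReal} [Fact (1 ≤ p)]
    (T : X →L[ℝ] Lp E p μ) {l : Filter ℕ} [l.NeBot] (hl : l ≤ atTop) {f : ℕ → X} {x : X}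
    (hx : ∀ Λ : StrongDual ℝ X, Tendsto (fun m => Λ (f m)) l (𝓝 (Λ x))) {g : α → E}
    (hae : ∀ᵐ a ∂μ, Tendsto (fun m => T (f m) a) atTop (𝓝 (g a))) :
    T x =ᵐ[μ] g := by
  obtain ⟨y, hy, hyx⟩ := Metric.exists_seq_tendsto_of_forall_mem_closure fun N =>
    mem_closure_convexHull_image_of_forall_tendsto_dual hx (hl (Ici_mem_atTop N))
  have hTy : ∀ N, T (y N) ∈ convexHull ℝ ((fun m => T (f m)) '' Ici N) := fun N => by
    rw [← image_image]
    exact (T.toLinearMap.image_convexHull _).subset (mem_image_of_mem T (hy N))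
  refine Lp.ae_eq_of_tendsto_of_ae_tendsto ((T.continuous.tendsto x).comp hyx) ?_
  filter_upwards [hae, ae_all_iff.2 fun N => Lp.ae_mem_convexHull_image (hTy N)] with a ha hconv
  exact ha.of_forall_mem_convexHull_image_Ici hconv

theorem statement15_general {α : Type*} [MeasurableSpace α] (μ : Measure α)
    (X : Type*) [NormedAddCommGroup X] [NormedSpace ℝ X]
    (hrefl : Function.Surjective (NormedSpace.inclusionInDoubleDual ℝ X))
    (T : X →L[ℝ] Lp ℝ 1 μ) (hT : Function.Injective T)
    (f : ℕ → X) (hbdd : ∃ M : ℝ, ∀ m, ‖f m‖ ≤ M)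
    (g : α → ℝ)
    (hae : ∀ᵐ a ∂μ, Tendsto (fun m => (T (f m) : α → ℝ) a) atTop (nhds (g a))) :
    ∃ flim : X, (T flim : α → ℝ) =ᵐ[μ] g ∧
      ‖flim‖ ≤ liminf (fun m => ‖f m‖) atTop ∧
      ∀ Λ : X →L[ℝ] ℝ, Tendsto (fun m => Λ (f m)) atTop (nhds (Λ flim)) := by
  obtain ⟨M, hM⟩ := hbdd
  have hlim : ∀ U : Ultrafilter ℕ, (U : Filter ℕ) ≤ atTop → ∃ x, (T x : α → ℝ) =ᵐ[μ] g ∧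
      ∀ Λ : StrongDual ℝ X, Tendsto (fun m => Λ (f m)) U (𝓝 (Λ x)) := fun U hU => by
    obtain ⟨x, hx⟩ := exists_forall_tendsto_dual_of_surjective_inclusionInDoubleDual hrefl U hM
    exact ⟨x, T.ae_eq_of_forall_tendsto_dual_of_ae_tendsto hU hx hae, hx⟩
  obtain ⟨x, hxg, -⟩ := hlim (Ultrafilter.of atTop) (Ultrafilter.of_le _)
  have hweak : ∀ Λ : StrongDual ℝ X, Tendsto (fun m => Λ (f m)) atTop (𝓝 (Λ x)) := fun Λ =>
    (tendsto_iff_ultrafilter _ _ _).2 fun U hU => by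
      obtain ⟨y, hyg, hy⟩ := hlim U hU
      rw [← hT (Lp.ext (hyg.trans hxg.symm))]
      exact hy Λ
  exact ⟨x, hxg, norm_le_liminf_of_forall_tendsto_dual hM hweak, hweak⟩

/-- let `μ` be σ-finite, `X` a reflexive Banach space (expressed via
surjectivity of the canonical inclusion into the double dual), and `T : X → L¹(μ)` an
injective bounded linear map. If `sup_m ‖f_m‖ < ∞` and the functions `T f_m` converge
`μ`-a.e. to a measurable `g`, then there is `f ∈ X` with `T f = g` a.e.,
`‖f‖ ≤ liminf ‖f_m‖`, and `f_m → f` weakly in `X`. -/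
theorem statement15 {α : Type*} [MeasurableSpace α] (μ : Measure α) [SigmaFinite μ]
    (X : Type*) [NormedAddCommGroup X] [NormedSpace ℝ X] [CompleteSpace X]
    (hrefl : Function.Surjective (NormedSpace.inclusionInDoubleDual ℝ X))
    (T : X →L[ℝ] Lp ℝ 1 μ) (hT : Function.Injective T)
    (f : ℕ → X) (hbdd : ∃ M : ℝ, ∀ m, ‖f m‖ ≤ M)
    (g : α → ℝ) (hg : Measurable g)
    (hae : ∀ᵐ a ∂μ, Tendsto (fun m => (T (f m) : α → ℝ) a) atTop (nhds (g a))) :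
    ∃ flim : X, (T flim : α → ℝ) =ᵐ[μ] g ∧
      ‖flim‖ ≤ liminf (fun m => ‖f m‖) atTop ∧
      ∀ Λ : X →L[ℝ] ℝ, Tendsto (fun m => Λ (f m)) atTop (nhds (Λ flim)) :=
  statement15_general μ X hrefl T hT f hbdd g hae
end
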